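/- The generalized exponential correlation function in one dimension, R(x,u) = exp(-θ|x-u|^p) with θ ≥ 0 and 0 < p ≤ 2, is a positive semidefinite kernel on ℝ: for any finite set of points x^(1),...,x^(n) ∈ ℝ and real coefficients c_1,...,c_n, the sum ∑_{i,j} c_i c_j exp(-θ|x^(i)-x^(j)|^p) is nonnegative. -/

import Mathlib

/-!
Schoenberg's argument. Call `ψ` conditionally negative definite if `∑ cᵢ cⱼ ψ(xᵢ, xⱼ) ≤ 0`
whenever `∑ cᵢ = 0`. For such a symmetric `ψ` and a base point `x₀`, the matrix
`ψ(xᵢ, x₀) + ψ(x₀, xⱼ) - ψ(xᵢ, xⱼ) - ψ(x₀, x₀)` is positive semidefinite (add `x₀` to the points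
with weight `-∑ cᵢ`). Entrywise `exp` preserves positive semidefiniteness (Schur product
theorem and the power series), and rescaling by `exp(-θ ψ(xᵢ, x₀))` on both sides turns
`exp(θ ·)` of that matrix into `exp(-θ ψ(xᵢ, xⱼ))`.

`(x - y) ^ 2` and `1 - cos ((x - y) t)` are conditionally negative definite by direct expansion,
and for `0 < p < 2` the identity `|d| ^ p · C_p = ∫₀^∞ (1 - cos (d t)) t ^ (-1 - p) dt`
with `C_p > 0` exhibits `|x - y| ^ p` as a positive mixture of the latter.
-/

open Real Filter Topology Matrix MeasureTheory Set

namespace Matrix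

variable {ι : Type*} [Fintype ι]

lemma dotProduct_mulVec_eq_sum (M : Matrix ι ι ℝ) (c : ι → ℝ) :
    c ⬝ᵥ M *ᵥ c = ∑ i, ∑ j, c i * c j * M i j := by
  simp only [dotProduct, mulVec, Finset.mul_sum]
  exact Finset.sum_congr rfl fun i _ => Finset.sum_congr rfl fun j _ => by ring

lemma PosSemidef.sum_mul_mul_nonneg {M : Matrix ι ι ℝ} (hM : M.PosSemidef) (c : ι → ℝ) :
    0 ≤ ∑ i, ∑ j, c i * c j * M i j := by
  simpa [dotProduct_mulVec_eq_sum] using hM.dotProduct_mulVec_nonneg c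

lemma PosSemidef.of_sum_mul_mul_nonneg {M : Matrix ι ι ℝ} (hM : M.IsSymm)
    (h : ∀ c : ι → ℝ, 0 ≤ ∑ i, ∑ j, c i * c j * M i j) : M.PosSemidef :=
  .of_dotProduct_mulVec_nonneg (by rwa [IsHermitian, conjTranspose_eq_transpose_of_trivial])
    fun c => by simpa [dotProduct_mulVec_eq_sum] using h c

lemma PosSemidef.map_pow {A : Matrix ι ι ℝ} (hA : A.PosSemidef) (k : ℕ) :
    (A.map (· ^ k)).PosSemidef := by
  induction k with
  | zero =>
    have : A.map (· ^ 0) = vecMulVec 1 1 := by ext; simp [vecMulVec]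
    rw [this]
    simpa using posSemidef_vecMulVec_self_star (1 : ι → ℝ)
  | succ k ih =>
    have : A.map (· ^ (k + 1)) = A.map (· ^ k) ⊙ A := by ext; simp [pow_succ]
    exact this ▸ ih.hadamard hA

lemma PosSemidef.of_tendsto {F : ℕ → Matrix ι ι ℝ} {A : Matrix ι ι ℝ}
    (hF : ∀ N, (F N).PosSemidef) (hA : Tendsto F atTop (𝓝 A)) : A.PosSemidef := by
  refine .of_sum_mul_mul_nonneg ?_ fun c =>
    ge_of_tendsto' (x := atTop) ?_ fun N => (hF N).sum_mul_mul_nonneg c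
  · exact tendsto_nhds_unique ((continuous_id.matrix_transpose.tendsto A).comp hA)
      (hA.congr fun N => by
        simpa [conjTranspose_eq_transpose_of_trivial] using (hF N).isHermitian.symm)
  · have : Continuous fun M : Matrix ι ι ℝ => ∑ i, ∑ j, c i * c j * M i j := by fun_prop
    exact (this.tendsto A).comp hA

lemma PosSemidef.map_exp {A : Matrix ι ι ℝ} (hA : A.PosSemidef) : (A.map exp).PosSemidef := by
  refine .of_tendsto (F := fun N => ∑ k ∈ Finset.range N, ((k.factorial : ℝ)⁻¹) • A.map (· ^ k))
    (fun N => posSemidef_sum _ fun k _ => (hA.map_pow k).smul (by positivity)) ?_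
  refine tendsto_pi_nhds.2 fun i => tendsto_pi_nhds.2 fun j => ?_
  simpa [Matrix.sum_apply, div_eq_inv_mul, ← Real.exp_eq_exp_ℝ] using
    (NormedSpace.expSeries_div_hasSum_exp (A i j)).tendsto_sum_nat

end Matrix

variable {α : Type*}

def IsCondNegDefKernel (ψ : α → α → ℝ) : Prop :=
  ∀ (ι : Type) [Fintype ι] (x : ι → α) (c : ι → ℝ), ∑ i, c i = 0 →
    ∑ i, ∑ j, c i * c j * ψ (x i) (x j) ≤ 0

namespace IsCondNegDefKernel

variable {ψ : α → α → ℝ}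

lemma mul_const (hψ : IsCondNegDefKernel ψ) {a : ℝ} (ha : 0 ≤ a) :
    IsCondNegDefKernel fun x y => ψ x y * a := by
  intro ι _ x c hc
  have h := mul_nonpos_of_nonpos_of_nonneg (hψ ι x c hc) ha
  simpa only [Finset.sum_mul, mul_assoc] using h

lemma integral {β : Type*} [MeasurableSpace β] {μ : Measure β} {f : β → α → α → ℝ}
    (hf : ∀ᵐ t ∂μ, IsCondNegDefKernel (f t)) (hint : ∀ x y, Integrable (fun t => f t x y) μ) :
    IsCondNegDefKernel fun x y => ∫ t, f t x y ∂μ := by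
  intro ι _ x c hc
  have hswap : ∑ i, ∑ j, c i * c j * ∫ t, f t (x i) (x j) ∂μ =
      ∫ t, ∑ i, ∑ j, c i * c j * f t (x i) (x j) ∂μ := by
    rw [integral_finsetSum _ fun i _ => integrable_finsetSum _ fun j _ => (hint _ _).const_mul _]
    refine Finset.sum_congr rfl fun i _ => ?_
    rw [integral_finsetSum _ fun j _ => (hint _ _).const_mul _]
    simp only [integral_const_mul]
  rw [hswap]
  exact integral_nonpos_of_ae (hf.mono fun t ht => ht ι x c hc)

lemma sum_mul_mul_basepoint_nonneg (hψ : IsCondNegDefKernel ψ) {ι : Type} [Fintype ι]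
    (x : ι → α) (x₀ : α) (c : ι → ℝ) :
    0 ≤ ∑ i, ∑ j, c i * c j * (ψ (x i) x₀ + ψ x₀ (x j) - ψ (x i) (x j) - ψ x₀ x₀) := by
  have h := hψ _ (fun o : Option ι => o.elim x₀ x) (fun o => o.elim (-∑ i, c i) c)
    (by simp [Fintype.sum_option])
  simp only [Fintype.sum_option, Option.elim_none, Option.elim_some] at h
  have expand : ∀ i j, c i * c j * (ψ (x i) x₀ + ψ x₀ (x j) - ψ (x i) (x j) - ψ x₀ x₀) =
      (c i * ψ (x i) x₀) * c j + c i * (c j * ψ x₀ (x j)) - c i * c j * ψ (x i) (x j)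
        - c i * c j * ψ x₀ x₀ := fun i j => by ring
  simp only [expand, Finset.sum_add_distrib, Finset.sum_sub_distrib, ← Finset.sum_mul,
    ← Finset.mul_sum] at h ⊢
  ring_nf at h ⊢
  simp only [Finset.sum_neg_distrib, mul_assoc (∑ i, c i), ← Finset.mul_sum] at h
  linarith

lemma posSemidef_exp_neg_mul [Nonempty α] (hψ : IsCondNegDefKernel ψ)
    (hsymm : ∀ x y, ψ x y = ψ y x) {θ : ℝ} (hθ : 0 ≤ θ) {ι : Type} [Fintype ι] (x : ι → α) :
    (of fun i j => exp (-θ * ψ (x i) (x j))).PosSemidef := by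
  let x₀ : α := Classical.arbitrary α
  let B : Matrix ι ι ℝ := of fun i j => ψ (x i) x₀ + ψ x₀ (x j) - ψ (x i) (x j) - ψ x₀ x₀
  have hB : B.PosSemidef :=
    .of_sum_mul_mul_nonneg (by ext i j; simp [B, hsymm]; ring)
      (hψ.sum_mul_mul_basepoint_nonneg x x₀)
  let d : ι → ℝ := fun i => exp (-θ * ψ (x i) x₀)
  have hdecomp : of (fun i j => exp (-θ * ψ (x i) (x j))) =
      exp (θ * ψ x₀ x₀) • (vecMulVec d d ⊙ (θ • B).map exp) := by
    ext i j
    simp only [of_apply, Matrix.smul_apply, hadamard_apply, vecMulVec_apply, map_apply,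
      smul_eq_mul, d, B, ← exp_add, hsymm x₀ (x j)]
    ring_nf
  rw [hdecomp]
  exact ((posSemidef_vecMulVec_self_star d).hadamard (hB.smul hθ).map_exp).smul (exp_pos _).le

end IsCondNegDefKernel

lemma isCondNegDefKernel_sub_sq : IsCondNegDefKernel fun x y : ℝ => (x - y) ^ 2 := by
  intro ι _ x c hc
  have expand : ∀ i j, c i * c j * (x i - x j) ^ 2 =
      (c i * x i ^ 2) * c j + c i * (c j * x j ^ 2) - 2 * (c i * x i) * (c j * x j) :=
    fun i j => by ring
  simp only [expand, Finset.sum_add_distrib, Finset.sum_sub_distrib, ← Finset.sum_mul,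
    ← Finset.mul_sum, hc]
  nlinarith [sq_nonneg (∑ i, c i * x i)]

lemma isCondNegDefKernel_one_sub_cos (t : ℝ) :
    IsCondNegDefKernel fun x y : ℝ => 1 - cos ((x - y) * t) := by
  intro ι _ x c hc
  have expand : ∀ i j, c i * c j * (1 - cos ((x i - x j) * t)) = c i * c j -
      ((c i * cos (x i * t)) * (c j * cos (x j * t)) +
        (c i * sin (x i * t)) * (c j * sin (x j * t))) :=
    fun i j => by rw [sub_mul, cos_sub]; ring
  simp only [expand, Finset.sum_add_distrib, Finset.sum_sub_distrib, ← Finset.sum_mul,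
    ← Finset.mul_sum, hc]
  nlinarith [sq_nonneg (∑ i, c i * cos (x i * t)), sq_nonneg (∑ i, c i * sin (x i * t))]

section OneSubCosIntegral

variable {p : ℝ}

lemma continuousOn_one_sub_cos_mul_rpow (p a : ℝ) :
    ContinuousOn (fun t : ℝ => (1 - cos (a * t)) * t ^ (-1 - p)) (Ioi 0) :=
  fun t ht => ((by fun_prop : Continuous fun t : ℝ => 1 - cos (a * t)).continuousAt.mul
    (continuousAt_rpow_const t _ (.inl ht.ne'))).continuousWithinAt

lemma integrableOn_one_sub_cos_mul_rpow (hp0 : 0 < p) (hp2 : p < 2) (a : ℝ) :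
    IntegrableOn (fun t => (1 - cos (a * t)) * t ^ (-1 - p)) (Ioi 0) := by
  have hmeas : ∀ s ⊆ Ioi (0 : ℝ), MeasurableSet s →
      AEStronglyMeasurable (fun t => (1 - cos (a * t)) * t ^ (-1 - p)) (volume.restrict s) :=
    fun s hs hms => ((continuousOn_one_sub_cos_mul_rpow p a).mono hs).aestronglyMeasurable hms
  have hnorm : ∀ t ∈ Ioi (0 : ℝ),
      ‖(1 - cos (a * t)) * t ^ (-1 - p)‖ = (1 - cos (a * t)) * t ^ (-1 - p) := fun t ht =>
    Real.norm_of_nonneg (mul_nonneg (by linarith [cos_le_one (a * t)]) (rpow_nonneg ht.le _))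
  rw [← Ioc_union_Ioi_eq_Ioi zero_le_one]
  refine IntegrableOn.union ?_ ?_
  · -- `1 - cos u ≤ u ^ 2 / 2` tames the singularity at `0`
    have hint : IntegrableOn (fun t : ℝ => a ^ 2 / 2 * t ^ (1 - p)) (Ioc 0 1) :=
      (intervalIntegral.intervalIntegrable_rpow' (a := 0) (b := 1) (r := 1 - p)
        (by linarith)).1.const_mul _
    refine hint.mono' (hmeas _ Ioc_subset_Ioi_self measurableSet_Ioc)
      (ae_restrict_of_forall_mem measurableSet_Ioc fun t ht => ?_)
    rw [hnorm t ht.1, show -1 - p = (1 - p) - 2 by ring, rpow_sub ht.1, rpow_two]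
    have hcos := one_sub_sq_div_two_le_cos (x := a * t)
    have ht2 : 0 < t ^ 2 := by have := ht.1; positivity
    rw [mul_div_assoc', div_le_iff₀ ht2]
    have := rpow_nonneg ht.1.le (1 - p)
    nlinarith
  · refine ((integrableOn_Ioi_rpow_of_lt (a := -1 - p) (by linarith) one_pos).const_mul 2).mono'
      (hmeas _ (Ioi_subset_Ioi zero_le_one) measurableSet_Ioi)
      (ae_restrict_of_forall_mem measurableSet_Ioi fun t ht => ?_)
    have ht0 : (0 : ℝ) < t := zero_lt_one.trans ht
    rw [hnorm t ht0]
    exact mul_le_mul_of_nonneg_right (by linarith [neg_one_le_cos (a * t)]) (rpow_nonneg ht0.le _)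

noncomputable def oneSubCosIntegral (p : ℝ) : ℝ := ∫ t in Ioi 0, (1 - cos t) * t ^ (-1 - p)

lemma oneSubCosIntegral_pos (hp0 : 0 < p) (hp2 : p < 2) : 0 < oneSubCosIntegral p := by
  have hint := integrableOn_one_sub_cos_mul_rpow hp0 hp2 1
  simp only [one_mul] at hint
  rw [oneSubCosIntegral, setIntegral_pos_iff_support_of_nonneg_ae
    (ae_restrict_of_forall_mem measurableSet_Ioi fun t ht =>
      mul_nonneg (by linarith [cos_le_one t]) (rpow_nonneg (le_of_lt ht) _)) hint]
  refine ((Measure.measure_Ioo_pos volume).2 pi_pos).trans_le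
    (measure_mono fun t ht => ⟨?_, ht.1⟩)
  have hcos : cos t < 1 := by
    simpa using cos_lt_cos_of_nonneg_of_le_pi le_rfl ht.2.le ht.1
  exact (mul_pos (by linarith) (rpow_pos_of_pos ht.1 _)).ne'

lemma integral_one_sub_cos_mul_rpow (hp0 : 0 < p) (d : ℝ) :
    ∫ t in Ioi 0, (1 - cos (d * t)) * t ^ (-1 - p) = |d| ^ p * oneSubCosIntegral p := by
  rcases eq_or_ne d 0 with rfl | hd
  · simp [zero_rpow hp0.ne']
  have hb : 0 < |d| := abs_pos.2 hd
  have hscale : ∀ t ∈ Ioi (0 : ℝ), (1 - cos (d * t)) * t ^ (-1 - p) =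
      |d| ^ (1 + p) * ((1 - cos (|d| * t)) * (|d| * t) ^ (-1 - p)) := fun t ht => by
    have hcos : cos (d * t) = cos (|d| * t) := by
      rw [← cos_abs, abs_mul, abs_of_pos (show (0 : ℝ) < t from ht)]
    rw [hcos, mul_rpow hb.le (le_of_lt ht), mul_left_comm, ← mul_assoc (|d| ^ (1 + p)),
      ← rpow_add hb]
    simp
  rw [setIntegral_congr_fun measurableSet_Ioi hscale, integral_const_mul,
    integral_comp_mul_left_Ioi (fun u => (1 - cos u) * u ^ (-1 - p)) 0 hb, mul_zero, smul_eq_mul,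
    ← mul_assoc, ← rpow_neg_one, ← rpow_add hb, oneSubCosIntegral]
  ring_nf

end OneSubCosIntegral

lemma isCondNegDefKernel_abs_sub_rpow {p : ℝ} (hp0 : 0 < p) (hp2 : p ≤ 2) :
    IsCondNegDefKernel fun x y : ℝ => |x - y| ^ p := by
  rcases hp2.lt_or_eq with hp2 | rfl
  · have hC := oneSubCosIntegral_pos hp0 hp2
    have hrepr : (fun x y : ℝ => |x - y| ^ p) = fun x y =>
        (∫ t in Ioi 0, (1 - cos ((x - y) * t)) * t ^ (-1 - p)) * (oneSubCosIntegral p)⁻¹ := by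
      ext x y
      rw [integral_one_sub_cos_mul_rpow hp0, mul_inv_cancel_right₀ hC.ne']
    rw [hrepr]
    refine IsCondNegDefKernel.mul_const (.integral ?_ fun x y =>
      integrableOn_one_sub_cos_mul_rpow hp0 hp2 _) (inv_nonneg.2 hC.le)
    exact ae_restrict_of_forall_mem measurableSet_Ioi fun t ht =>
      (isCondNegDefKernel_one_sub_cos t).mul_const (rpow_nonneg (le_of_lt ht) _)
  · simpa [rpow_two] using isCondNegDefKernel_sub_sq

/-- The one-dimensional generalized exponential correlation function
`R(x,u) = exp(-θ |x-u|^p)` with `θ ≥ 0` and `0 < p ≤ 2` is a positive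
semidefinite kernel on `ℝ`. -/
theorem genExp_kernel_posSemidef
    (θ p : ℝ) (hθ : 0 ≤ θ) (hp0 : 0 < p) (hp2 : p ≤ 2)
    (n : ℕ) (x : Fin n → ℝ) (c : Fin n → ℝ) :
    0 ≤ ∑ i, ∑ j, c i * c j * Real.exp (-θ * |x i - x j| ^ p) :=
  ((isCondNegDefKernel_abs_sub_rpow hp0 hp2).posSemidef_exp_neg_mul
    (fun x y => by rw [abs_sub_comm]) hθ x).sum_mul_mul_nonneg c
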